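/- arXiv:1910.07125 — 2 statements merged into one kernel-verified Lean document; each statement's English description precedes it below -/
import Mathlib

section
/- Let T be a tree on n vertices with geodesic distance (Wiener index) S. Then the geodesic distance of the first-order subdivision of T equals 8S − 2n(n−1). -/
/-- The geodesic distance (Wiener index) of a finite simple graph: the sum of the graph
distances over all unordered pairs of distinct vertices. -/
noncomputable def wienerIndex {V : Type} [Fintype V] (G : SimpleGraph V) : ℕ :=
  (∑ u : V, ∑ v : V, G.dist u v) / 2

/-- The first-order subdivision of a simple graph `G = (V, E)`: the bipartite graph on
`V ⊕ E` where `v : V` is adjacent to `e : E` iff `v` is an endpoint of `e`. -/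
def firstSubdivision {V : Type} (G : SimpleGraph V) : SimpleGraph (V ⊕ G.edgeSet) :=
  SimpleGraph.fromRel fun a b =>
    match a, b with
    | Sum.inl v, Sum.inr e => v ∈ (e : Sym2 V)
    | _, _ => False

/-!
The first subdivision `S` of a tree `T` is again a tree, in which the vertex `w_e` of an edge
`e = ab` has exactly the two neighbours `a` and `b`. In a tree, exactly one neighbour of a vertex
`x ≠ z` is closer to `z` than `x`, so `d(z, a) + d(z, b) = 2 d(z, w_e)` in `S`; together with
`d_S(u, v) = 2 d_T(u, v)` this expresses the transmissions `σ(x) = ∑ y, d(x, y)` of `S` through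
those of `T`. Orienting the edges of `T` away from a vertex `u` matches them with the vertices
other than `u`, which gives `∑_{ab ∈ E} (d(u, a) + d(u, b)) = 2 σ(u) - (n - 1)`. Summing these
identities gives `16 S - 4 n (n - 1)` for the total transmission of `S`.
-/

open Finset Sum SimpleGraph

theorem Finset.even_sum_sum_of_symm {α : Type*} [DecidableEq α] (s : Finset α)
    {f : α → α → ℕ} (hsymm : ∀ a b, f a b = f b a) (hdiag : ∀ a, f a a = 0) :
    Even (∑ a ∈ s, ∑ b ∈ s, f a b) := by
  induction s using Finset.induction_on with
  | empty => simp
  | insert a s ha ih =>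
    simp only [sum_insert ha, hdiag, zero_add, sum_add_distrib]
    rw [sum_congr rfl fun b _ => hsymm b a, ← add_assoc, ← two_mul]
    exact (even_two_mul _).add ih

namespace SimpleGraph

section Tree

variable {V : Type*} {G : SimpleGraph V}

theorem Reachable.exists_adj_dist_add_one_eq {z x : V} (h : G.Reachable x z) (hne : x ≠ z) :
    ∃ y, G.Adj x y ∧ G.dist z y + 1 = G.dist z x := by
  obtain ⟨p, hp⟩ := h.exists_walk_length_eq_dist
  cases p with
  | nil => exact absurd rfl hne
  | @cons _ y _ hadj q =>
    have hq := dist_le q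
    have htri := hadj.reachable.dist_triangle_left z
    rw [dist_eq_one_iff_adj.mpr hadj] at htri
    rw [Walk.length_cons] at hp
    refine ⟨y, hadj, ?_⟩
    rw [dist_comm, dist_comm (v := x)]
    omega

theorem IsTree.eq_of_adj_of_dist_add_one_eq (hG : G.IsTree) {z x y₁ y₂ : V}
    (h₁ : G.Adj y₁ x) (h₂ : G.Adj y₂ x)
    (hd₁ : G.dist z y₁ + 1 = G.dist z x) (hd₂ : G.dist z y₂ + 1 = G.dist z x) : y₁ = y₂ := by
  obtain ⟨p₁, hp₁⟩ := (hG.connected z y₁).exists_walk_length_eq_dist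
  obtain ⟨p₂, hp₂⟩ := (hG.connected z y₂).exists_walk_length_eq_dist
  have hpath₁ := (p₁.concat h₁).isPath_of_length_eq_dist (by rw [Walk.length_concat, hp₁, hd₁])
  have hpath₂ := (p₂.concat h₂).isPath_of_length_eq_dist (by rw [Walk.length_concat, hp₂, hd₂])
  simpa [Walk.penultimate_concat] using
    congrArg Walk.penultimate ((hG.existsUnique_path z x).unique hpath₁ hpath₂)

theorem IsTree.sum_dist_neighbors_add_two (hG : G.IsTree) {z x : V} (hne : x ≠ z)
    {s : Finset V} (hs : ∀ y, y ∈ s ↔ G.Adj x y) :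
    ∑ y ∈ s, G.dist z y + 2 = #s * (G.dist z x + 1) := by
  classical
  obtain ⟨p, hxp, hp⟩ := (hG.connected x z).exists_adj_dist_add_one_eq hne
  have hps : p ∈ s := (hs p).mpr hxp
  have hchild : ∀ y ∈ s.erase p, G.dist z y = G.dist z x + 1 := by
    intro y hy
    obtain ⟨hyp, hys⟩ := mem_erase.mp hy
    have hxy := (hs y).mp hys
    refine (hG.dist_eq_dist_add_one_of_adj z hxy).resolve_left fun h => hyp ?_
    exact hG.eq_of_adj_of_dist_add_one_eq hxy.symm hxp.symm h.symm hp
  rw [← add_sum_erase s _ hps, sum_congr rfl hchild, sum_const, card_erase_of_mem hps,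
    smul_eq_mul]
  obtain ⟨k, hk⟩ := Nat.exists_eq_add_of_le' (card_pos.mpr ⟨p, hps⟩)
  rw [hk, Nat.add_sub_cancel, ← hp]
  ring

theorem dist_le_dist_add_one_of_mem_edgeSet {e : Sym2 V} (he : e ∈ G.edgeSet) {u c : V}
    (hu : u ∈ e) (hc : c ∈ e) (v : V) : G.dist u v ≤ G.dist c v + 1 := by
  rcases eq_or_ne c u with rfl | hne
  · omega
  have hadj : G.Adj c u := by rwa [← mem_edgeSet, ← (Sym2.mem_and_mem_iff hne).mp ⟨hc, hu⟩]
  have hcases := hadj.diff_dist_adj (u := v)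
  rw [dist_comm, dist_comm (u := c)]
  omega

theorem card_toFinset_of_mem_edgeSet [DecidableEq V] {e : Sym2 V} (he : e ∈ G.edgeSet) :
    #e.toFinset = 2 :=
  Sym2.card_toFinset_of_not_isDiag e (G.not_isDiag_of_mem_edgeSet he)

noncomputable def transmission [Fintype V] (G : SimpleGraph V) (x : V) : ℕ :=
  ∑ y, G.dist x y

theorem IsTree.sum_edgeSet_sum_dist_add_card [Fintype V] [DecidableEq V] [Fintype G.edgeSet]
    (hG : G.IsTree) (u : V) :
    ∑ e : G.edgeSet, ∑ v ∈ (e : Sym2 V).toFinset, G.dist u v + Fintype.card G.edgeSet =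
      2 * G.transmission u := by
  choose p hadj hp using fun v : {v // v ≠ u} =>
    (hG.connected v u).exists_adj_dist_add_one_eq v.2
  let φ : {v // v ≠ u} → G.edgeSet := fun v => ⟨s(v, p v), hadj v⟩
  have hinj : φ.Injective := by
    intro v w h
    rcases Sym2.eq_iff.mp (congrArg Subtype.val h) with ⟨h, -⟩ | ⟨h₁, h₂⟩
    · exact Subtype.ext h
    · have hv := hp v
      have hw := hp w
      rw [h₂] at hv
      rw [← h₁] at hw
      omega
  have hcard : Fintype.card {v // v ≠ u} = Fintype.card G.edgeSet := by
    have hT := hG.card_edgeFinset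
    rw [edgeFinset_card] at hT
    rw [Fintype.card_subtype_compl, Fintype.card_subtype_eq]
    omega
  have hbij := (Fintype.bijective_iff_injective_and_card φ).mpr ⟨hinj, hcard⟩
  have hedge : ∀ v, ∑ x ∈ (φ v : Sym2 V).toFinset, G.dist u x + 1 = 2 * G.dist u v := by
    intro v
    simp only [φ, Sym2.toFinset_mk_eq]
    rw [sum_pair (hadj v).ne]
    have hv := hp v
    omega
  rw [← Fintype.sum_bijective φ hbij _ _ fun _ => rfl, ← hcard, Fintype.card_eq_sum_ones,
    ← sum_add_distrib, sum_congr rfl fun v _ => hedge v, ← mul_sum, transmission,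
    Fintype.sum_eq_add_sum_subtype_ne _ u, dist_self, zero_add]

theorem IsTree.sum_edgeSet_sum_transmission_add [Fintype V] [DecidableEq V] [Fintype G.edgeSet]
    (hG : G.IsTree) :
    ∑ e : G.edgeSet, ∑ v ∈ (e : Sym2 V).toFinset, G.transmission v +
        Fintype.card V * Fintype.card G.edgeSet = 2 * ∑ u, G.transmission u := by
  have h := sum_congr rfl fun u (_ : u ∈ univ) => hG.sum_edgeSet_sum_dist_add_card u
  rw [sum_add_distrib, sum_const, card_univ, smul_eq_mul, ← mul_sum, sum_comm] at h
  rw [← h]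
  congr 2 with e
  rw [sum_comm]
  exact sum_congr rfl fun v _ => sum_congr rfl fun u _ => dist_comm

end Tree

theorem two_mul_wienerIndex {V : Type} [Fintype V] (G : SimpleGraph V) :
    2 * wienerIndex G = ∑ u, G.transmission u := by
  classical
  exact Nat.mul_div_cancel'
    (univ.even_sum_sum_of_symm (fun _ _ => dist_comm) fun _ => dist_self).two_dvd

section Subdivision

variable {V : Type} {G : SimpleGraph V}

@[simp]
theorem firstSubdivision_adj_inl_inr {v : V} {e : G.edgeSet} :
    (firstSubdivision G).Adj (inl v) (inr e) ↔ v ∈ (e : Sym2 V) := by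
  simp [firstSubdivision]

@[simp]
theorem firstSubdivision_adj_inr_inl {v : V} {e : G.edgeSet} :
    (firstSubdivision G).Adj (inr e) (inl v) ↔ v ∈ (e : Sym2 V) := by
  simp [firstSubdivision]

@[simp]
theorem firstSubdivision_not_adj_inl_inl {u v : V} :
    ¬(firstSubdivision G).Adj (inl u) (inl v) := by
  simp [firstSubdivision]

@[simp]
theorem firstSubdivision_not_adj_inr_inr {e f : G.edgeSet} :
    ¬(firstSubdivision G).Adj (inr e) (inr f) := by
  simp [firstSubdivision]

def Walk.subdivide : ∀ {u v : V}, G.Walk u v → (firstSubdivision G).Walk (inl u) (inl v)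
  | _, _, .nil => .nil
  | u, _, .cons (v := w) h p =>
    .cons (v := inr ⟨s(u, w), h⟩) (by simp) (.cons (by simp) p.subdivide)

@[simp]
theorem Walk.length_subdivide {u v : V} (p : G.Walk u v) :
    p.subdivide.length = 2 * p.length := by
  induction p with
  | nil => rfl
  | cons _ p ih => simp only [subdivide, length_cons, ih]; ring

theorem two_mul_dist_le_length_firstSubdivision :
    ∀ {u v : V} (p : (firstSubdivision G).Walk (inl u) (inl v)), 2 * G.dist u v ≤ p.length
  | _, _, .nil => by simp
  | _, _, .cons (v := inl _) h _ => (firstSubdivision_not_adj_inl_inl h).elim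
  | _, _, .cons (v := inr _) _ (.cons (v := inr _) h _) =>
    (firstSubdivision_not_adj_inr_inr h).elim
  | u, v, .cons (v := inr e) h₁ (.cons (v := inl c) h₂ p) => by
    have hp := two_mul_dist_le_length_firstSubdivision p
    have huc := dist_le_dist_add_one_of_mem_edgeSet e.2 (firstSubdivision_adj_inl_inr.mp h₁)
      (firstSubdivision_adj_inr_inl.mp h₂) v
    simp only [Walk.length_cons]
    omega

theorem dist_firstSubdivision_inl_inl {u v : V} (h : G.Reachable u v) :
    (firstSubdivision G).dist (inl u) (inl v) = 2 * G.dist u v := by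
  obtain ⟨p, hp⟩ := h.exists_walk_length_eq_dist
  obtain ⟨q, hq⟩ := Reachable.exists_walk_length_eq_dist ⟨p.subdivide⟩
  refine le_antisymm ?_ (hq ▸ two_mul_dist_le_length_firstSubdivision q)
  calc _ ≤ p.subdivide.length := dist_le _
    _ = _ := by rw [Walk.length_subdivide, hp]

theorem connected_firstSubdivision (hG : G.Connected) : (firstSubdivision G).Connected := by
  obtain ⟨v₀⟩ := hG.nonempty
  have hinl : ∀ u, (firstSubdivision G).Reachable (inl v₀) (inl u) :=
    fun u => ⟨(hG v₀ u).some.subdivide⟩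
  refine (connected_iff_exists_forall_reachable _).mpr ⟨inl v₀, ?_⟩
  rintro (u | e)
  · exact hinl u
  · exact (hinl _).trans
      (Adj.reachable (firstSubdivision_adj_inl_inr.mpr (Sym2.out_fst_mem e.1)))

theorem natCard_edgeSet_firstSubdivision [Finite V] :
    Nat.card (firstSubdivision G).edgeSet = 2 * Nat.card G.edgeSet := by
  cases nonempty_fintype V
  classical
  let φ : G.Dart → (firstSubdivision G).edgeSet := fun d =>
    ⟨s(inl d.fst, inr ⟨d.edge, d.edge_mem⟩), by simp [Dart.edge]⟩
  have hφ : Function.Bijective φ := by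
    refine ⟨fun d d' h => ?_, ?_⟩
    · have h := congrArg Subtype.val h
      simp only [φ, Sym2.eq_iff, inl.injEq, inr.injEq, Subtype.mk.injEq, reduceCtorEq,
        and_false, or_false] at h
      obtain ⟨hfst, hedge⟩ := h
      rcases (dart_edge_eq_iff d d').mp hedge with h | rfl
      · exact h
      · exact (d'.adj.ne hfst.symm).elim
    · have hmk : ∀ a (e : G.edgeSet) (ha : a ∈ (e : Sym2 V)),
          ∃ d, (φ d : Sym2 (V ⊕ G.edgeSet)) = s(inl a, inr e) := by
        intro a e ha
        have hadj : G.Adj a (Sym2.Mem.other ha) := by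
          rw [← mem_edgeSet, Sym2.other_spec ha]; exact e.2
        refine ⟨⟨(a, _), hadj⟩, ?_⟩
        simp only [φ, Dart.edge]
        congr
        exact Sym2.other_spec ha
      rintro ⟨z, hz⟩
      induction z using Sym2.ind with
      | h x y =>
        rcases x with a | e <;> rcases y with b | f
        · simp at hz
        · obtain ⟨d, hd⟩ := hmk a f (by simpa using hz)
          exact ⟨d, Subtype.ext hd⟩
        · obtain ⟨d, hd⟩ := hmk b e (by simpa using hz)
          exact ⟨d, Subtype.ext (hd.trans Sym2.eq_swap)⟩
        · simp at hz
  rw [← Nat.card_eq_of_bijective φ hφ, Nat.card_eq_fintype_card, dart_card_eq_twice_card_edges,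
    edgeFinset_card, Nat.card_eq_fintype_card]

theorem isTree_firstSubdivision [Finite V] (hG : G.IsTree) : (firstSubdivision G).IsTree := by
  rw [isTree_iff_connected_and_card] at hG ⊢
  refine ⟨connected_firstSubdivision hG.1, ?_⟩
  rw [natCard_edgeSet_firstSubdivision, Nat.card_sum]
  omega

theorem sum_dist_firstSubdivision_inl [DecidableEq V] [Finite V] (hG : G.IsTree)
    (e : G.edgeSet) {z : V ⊕ G.edgeSet} (hz : z ≠ inr e) :
    ∑ v ∈ (e : Sym2 V).toFinset, (firstSubdivision G).dist z (inl v) =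
      2 * (firstSubdivision G).dist z (inr e) := by
  let s := (e : Sym2 V).toFinset.map (.inl : V ↪ V ⊕ G.edgeSet)
  have hcard : #s = 2 := by rw [card_map, card_toFinset_of_mem_edgeSet e.2]
  have hsum := (isTree_firstSubdivision hG).sum_dist_neighbors_add_two hz.symm (s := s)
    (by rintro (v | f) <;> simp [s])
  rw [sum_map, hcard] at hsum
  simp only [Function.Embedding.inl_apply] at hsum
  omega

theorem transmission_firstSubdivision_inl [Fintype V] [DecidableEq V] [Fintype G.edgeSet]
    (hG : G.IsTree) (u : V) :
    (firstSubdivision G).transmission (inl u) + Fintype.card G.edgeSet =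
      4 * G.transmission u := by
  have hedge : ∀ e : G.edgeSet,
      (firstSubdivision G).dist (inl u) (inr e) = ∑ v ∈ (e : Sym2 V).toFinset, G.dist u v := by
    intro e
    have htwo := sum_dist_firstSubdivision_inl hG e (z := inl u) inl_ne_inr
    simp only [dist_firstSubdivision_inl_inl (hG.connected u _), ← mul_sum] at htwo
    omega
  have hsum := hG.sum_edgeSet_sum_dist_add_card u
  rw [transmission, Fintype.sum_sum_type]
  simp only [dist_firstSubdivision_inl_inl (hG.connected u _), hedge, ← mul_sum]
  rw [transmission] at hsum ⊢
  omega

theorem transmission_firstSubdivision_inr [Fintype V] [DecidableEq V] [Fintype G.edgeSet]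
    (hG : G.IsTree) (e : G.edgeSet) :
    (firstSubdivision G).transmission (inr e) + Fintype.card G.edgeSet + 1 =
      2 * ∑ v ∈ (e : Sym2 V).toFinset, G.transmission v := by
  have hpoint : ∀ z, ∑ v ∈ (e : Sym2 V).toFinset, (firstSubdivision G).dist (inl v) z =
      2 * (firstSubdivision G).dist (inr e) z + if inr e = z then 2 else 0 := by
    intro z
    rw [sum_congr rfl fun v _ => dist_comm (u := inl v) (v := z), dist_comm]
    split_ifs with hz
    · subst hz
      rw [sum_congr rfl fun v hv => dist_eq_one_iff_adj.mpr
        (firstSubdivision_adj_inr_inl.mpr (Sym2.mem_toFinset.mp hv)), sum_const,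
        card_toFinset_of_mem_edgeSet e.2, dist_self, smul_eq_mul]
    · rw [sum_dist_firstSubdivision_inl hG e (Ne.symm hz), add_zero]
  have hsum : ∑ v ∈ (e : Sym2 V).toFinset, (firstSubdivision G).transmission (inl v) =
      2 * (firstSubdivision G).transmission (inr e) + 2 := by
    simp only [transmission]
    rw [sum_comm]
    simp only [hpoint, sum_add_distrib, ← mul_sum, sum_ite_eq, mem_univ, if_true]
  have hinl := sum_congr rfl fun v (_ : v ∈ (e : Sym2 V).toFinset) =>
    transmission_firstSubdivision_inl hG v
  rw [sum_add_distrib, sum_const, card_toFinset_of_mem_edgeSet e.2, hsum, ← mul_sum] at hinl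
  simp only [smul_eq_mul] at hinl
  omega

end Subdivision

end SimpleGraph

/-- For a tree `T` on `n` vertices with Wiener index `S`, the Wiener index of its
first-order subdivision equals `8S - 2n(n-1)`. -/
theorem wiener_firstSubdivision {V : Type} [Fintype V] (G : SimpleGraph V)
    [Fintype G.edgeSet] (hG : G.IsTree) :
    (wienerIndex (firstSubdivision G) : ℤ) =
      8 * (wienerIndex G : ℤ) -
        2 * (Fintype.card V : ℤ) * ((Fintype.card V : ℤ) - 1) := by
  classical
  have hS := two_mul_wienerIndex (firstSubdivision G)
  have hT := two_mul_wienerIndex G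
  rw [Fintype.sum_sum_type] at hS
  have hinl := sum_congr rfl fun u (_ : u ∈ univ) => transmission_firstSubdivision_inl hG u
  have hinr := sum_congr rfl fun e (_ : e ∈ univ) => transmission_firstSubdivision_inr hG e
  simp only [sum_add_distrib, sum_const, card_univ, smul_eq_mul, ← mul_sum] at hinl hinr
  have hedge := hG.sum_edgeSet_sum_transmission_add
  have hcard := hG.card_edgeFinset
  rw [edgeFinset_card] at hcard
  zify at hS hT hinl hinr hedge hcard
  refine mul_left_cancel₀ two_ne_zero ?_
  linear_combination hS + hinl + hinr + 2 * hedge - 8 * hT -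
    (4 * (Fintype.card V : ℤ) + Fintype.card G.edgeSet) * hcard
end

section
/- Fix an integer n ≥ 3. Define rational sequences Θ_t = (((n−2)t − 1)(n−1)^t + 1)/(n−2)², Ω_t = (2/(n−2)³)·(((n−2)t − 1)(n−1)^{2t} − ((n−2)t − 2)(n−1)^t − 1), and Γ_t by Γ_1 = 1 and Γ_t = (n−1)·Γ_{t−1} + ((n−1)(n−2)/2)·Ω_{t−1} + Θ_t for t ≥ 2. Then for all t ≥ 1, Γ_t = (n−1)^{t−1} + ((t−1)(n−1)^{t+1} − (n−1)^{t−1} + 1)/(n−2)² + (((n−2)t − n)(n−1)^{2t} + 2(n−1)^{t+1})/(n−2)³. -/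
namespace CayleyTree

variable {K : Type*} [Field K]

def theta (n : K) (t : ℕ) : K :=
  (((n - 2) * t - 1) * (n - 1) ^ t + 1) / (n - 2) ^ 2

def omega (n : K) (t : ℕ) : K :=
  (2 / (n - 2) ^ 3) *
    (((n - 2) * t - 1) * (n - 1) ^ (2 * t) - ((n - 2) * t - 2) * (n - 1) ^ t - 1)

def gammaClosed (n : K) (t : ℕ) : K :=
  (n - 1) ^ (t - 1) + (((t : K) - 1) * (n - 1) ^ (t + 1) - (n - 1) ^ (t - 1) + 1) / (n - 2) ^ 2
    + (((n - 2) * t - n) * (n - 1) ^ (2 * t) + 2 * (n - 1) ^ (t + 1)) / (n - 2) ^ 3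

theorem gammaClosed_one (n : K) : gammaClosed n 1 = 1 := by
  simp [gammaClosed]

/-- Once `(n - 1) ^ (2 * t)` is split into powers of `(n - 1) ^ t`, this is a rational-function
identity in `n`, `t` and `(n - 1) ^ t`. -/
theorem gammaClosed_add_two [NeZero (2 : K)] {n : K} (hn : n - 2 ≠ 0) (t : ℕ) :
    gammaClosed n (t + 2) = (n - 1) * gammaClosed n (t + 1)
      + ((n - 1) * (n - 2) / 2) * omega n (t + 1) + theta n (t + 2) := by
  simp only [gammaClosed, omega, theta, Nat.add_sub_cancel, show t + 2 - 1 = t + 1 by omega,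
    two_mul, pow_add]
  push_cast
  field_simp
  ring

end CayleyTree

/-- Fix `n ≥ 3`.  With `Θ_t = (((n−2)t − 1)(n−1)^t + 1)/(n−2)²` and
`Ω_t = (2/(n−2)³)·(((n−2)t − 1)(n−1)^{2t} − ((n−2)t − 2)(n−1)^t − 1)`, let `Γ` be the
rational sequence with `Γ_1 = 1` and
`Γ_t = (n−1)·Γ_{t−1} + ((n−1)(n−2)/2)·Ω_{t−1} + Θ_t` for `t ≥ 2`.  Then for all `t ≥ 1`,
`Γ_t = (n−1)^{t−1} + ((t−1)(n−1)^{t+1} − (n−1)^{t−1} + 1)/(n−2)²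
      + (((n−2)t − n)(n−1)^{2t} + 2(n−1)^{t+1})/(n−2)³`. -/
theorem gamma_closed_form (n : ℕ) (hn : 3 ≤ n) (Γ : ℕ → ℚ)
    (h1 : Γ 1 = 1)
    (hrec : ∀ t : ℕ, 2 ≤ t →
      Γ t = ((n : ℚ) - 1) * Γ (t - 1)
        + (((n : ℚ) - 1) * ((n : ℚ) - 2) / 2) *
            ((2 / ((n : ℚ) - 2) ^ 3) *
              ((((n : ℚ) - 2) * (↑(t - 1) : ℚ) - 1) * ((n : ℚ) - 1) ^ (2 * (t - 1))
                - (((n : ℚ) - 2) * (↑(t - 1) : ℚ) - 2) * ((n : ℚ) - 1) ^ (t - 1) - 1))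
        + ((((n : ℚ) - 2) * t - 1) * ((n : ℚ) - 1) ^ t + 1) / ((n : ℚ) - 2) ^ 2) :
    ∀ t : ℕ, 1 ≤ t →
      Γ t = ((n : ℚ) - 1) ^ (t - 1)
        + (((t : ℚ) - 1) * ((n : ℚ) - 1) ^ (t + 1) - ((n : ℚ) - 1) ^ (t - 1) + 1) /
            ((n : ℚ) - 2) ^ 2
        + ((((n : ℚ) - 2) * t - (n : ℚ)) * ((n : ℚ) - 1) ^ (2 * t)
            + 2 * ((n : ℚ) - 1) ^ (t + 1)) / ((n : ℚ) - 2) ^ 3 := by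
  have hn2 : (n : ℚ) - 2 ≠ 0 := by
    rw [sub_ne_zero]
    exact_mod_cast (by omega : n ≠ 2)
  intro t ht
  change Γ t = CayleyTree.gammaClosed (n : ℚ) t
  induction t, ht using Nat.le_induction with
  | base => rw [h1, CayleyTree.gammaClosed_one]
  | succ t ht ih =>
    obtain ⟨s, rfl⟩ : ∃ s, t = s + 1 := ⟨t - 1, by omega⟩
    have hstep : Γ (s + 2) = ((n : ℚ) - 1) * Γ (s + 1)
        + (((n : ℚ) - 1) * ((n : ℚ) - 2) / 2) * CayleyTree.omega (n : ℚ) (s + 1)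
        + CayleyTree.theta (n : ℚ) (s + 2) :=
      hrec (s + 2) (by omega)
    rw [hstep, ih, CayleyTree.gammaClosed_add_two hn2]
end
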